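/- arXiv:1504.02850 — 6 statements merged into one kernel-verified Lean document; each statement's English description precedes it below -/
import Mathlib

section
/- Let Q₁ and Q₂ be quadratic stochastic operators on L¹(X,𝒜,μ). Then the two uniform distances d_u(Q₁,Q₂) := sup_{f∈𝒟} ‖Q₁(f,f) − Q₂(f,f)‖₁ and d̂_u(Q₁,Q₂) := sup_{f,g∈𝒟} ‖Q₁(f,g) − Q₂(f,g)‖₁ satisfy (1/4)·d̂_u(Q₁,Q₂) ≤ d_u(Q₁,Q₂) ≤ d̂_u(Q₁,Q₂); in particular they are equivalent metrics on the set of quadratic stochastic operators. -/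
open MeasureTheory Filter Topology

noncomputable section

/-- The set of densities in `L¹(μ)`. -/
def Density {X : Type*} [MeasurableSpace X] (μ : Measure X) : Set (Lp ℝ 1 μ) :=
  {f | 0 ≤ f ∧ ‖f‖ = 1}

/-- `Q : L¹ × L¹ → L¹` is a quadratic stochastic operator: bilinear, positivity preserving,
symmetric and `‖Q(f,g)‖₁ = ‖f‖₁ ‖g‖₁` for `f, g ≥ 0`. -/
structure IsQSO {X : Type*} [MeasurableSpace X] (μ : Measure X)
    (Q : Lp ℝ 1 μ → Lp ℝ 1 μ → Lp ℝ 1 μ) : Prop where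
  add_left : ∀ f f' g, Q (f + f') g = Q f g + Q f' g
  smul_left : ∀ (c : ℝ) f g, Q (c • f) g = c • Q f g
  add_right : ∀ f g g', Q f (g + g') = Q f g + Q f g'
  smul_right : ∀ (c : ℝ) f g, Q f (c • g) = c • Q f g
  nonneg : ∀ f g, 0 ≤ f → 0 ≤ g → 0 ≤ Q f g
  symm : ∀ f g, Q f g = Q g f
  norm_mul : ∀ f g, 0 ≤ f → 0 ≤ g → ‖Q f g‖ = ‖f‖ * ‖g‖

/-- The quadratic map `ℚ(f) = Q(f,f)`. -/
def QQ {X : Type*} [MeasurableSpace X] {μ : Measure X}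
    (Q : Lp ℝ 1 μ → Lp ℝ 1 μ → Lp ℝ 1 μ) (f : Lp ℝ 1 μ) : Lp ℝ 1 μ := Q f f

/-- The iterates `ℚⁿ`. -/
def Qiter {X : Type*} [MeasurableSpace X] {μ : Measure X}
    (Q : Lp ℝ 1 μ → Lp ℝ 1 μ → Lp ℝ 1 μ) (n : ℕ) : Lp ℝ 1 μ → Lp ℝ 1 μ := (QQ Q)^[n]

/-- `Pchain Q f n = P_f^{[0,n]}`, the nonhomogeneous Markov chain associated with `Q`
and the density `f`, i.e. `P_f^{[0,0]} = id` and
`P_f^{[0,n+1]}(g) = Q(ℚⁿ(f), P_f^{[0,n]}(g))`. -/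
def Pchain {X : Type*} [MeasurableSpace X] {μ : Measure X}
    (Q : Lp ℝ 1 μ → Lp ℝ 1 μ → Lp ℝ 1 μ) (f : Lp ℝ 1 μ) :
    ℕ → Lp ℝ 1 μ → Lp ℝ 1 μ
  | 0 => id
  | n + 1 => fun g => Q (Qiter Q n f) (Pchain Q f n g)

/-- The metric `d_u(Q₁,Q₂) = sup_{f ∈ 𝒟} ‖ℚ₁(f) - ℚ₂(f)‖₁`. -/
def du {X : Type*} [MeasurableSpace X] (μ : Measure X)
    (Q₁ Q₂ : Lp ℝ 1 μ → Lp ℝ 1 μ → Lp ℝ 1 μ) : ℝ :=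
  ⨆ f : Density μ, ‖Q₁ f f - Q₂ f f‖

/-- The metric `d̂_u(Q₁,Q₂) = sup_{f,g ∈ 𝒟} ‖Q₁(f,g) - Q₂(f,g)‖₁`. -/
def dhat {X : Type*} [MeasurableSpace X] (μ : Measure X)
    (Q₁ Q₂ : Lp ℝ 1 μ → Lp ℝ 1 μ → Lp ℝ 1 μ) : ℝ :=
  ⨆ f : Density μ, ⨆ g : Density μ, ‖Q₁ f g - Q₂ f g‖

/-- `supDiff μ Q n = sup_{f,g,h ∈ 𝒟} ‖P_f^{[0,n]}(g) - P_f^{[0,n]}(h)‖₁`. -/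
def supDiff {X : Type*} [MeasurableSpace X] (μ : Measure X)
    (Q : Lp ℝ 1 μ → Lp ℝ 1 μ → Lp ℝ 1 μ) (n : ℕ) : ℝ :=
  ⨆ f : Density μ, ⨆ g : Density μ, ⨆ h : Density μ,
    ‖Pchain Q f n g - Pchain Q f n h‖

/-- `Q` is norm quasi-mixing. -/
def NormQuasiMixing {X : Type*} [MeasurableSpace X] (μ : Measure X)
    (Q : Lp ℝ 1 μ → Lp ℝ 1 μ → Lp ℝ 1 μ) : Prop :=
  Tendsto (fun n => supDiff μ Q n) atTop (𝓝 0)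

/-- `Q` is norm mixing (uniformly asymptotically stable). -/
def NormMixing {X : Type*} [MeasurableSpace X] (μ : Measure X)
    (Q : Lp ℝ 1 μ → Lp ℝ 1 μ → Lp ℝ 1 μ) : Prop :=
  ∃ f ∈ Density μ,
    Tendsto (fun n => ⨆ g : Density μ, ‖Qiter Q n g - f‖) atTop (𝓝 0)

end

private lemma norm_add_of_nonneg' {X : Type*} [MeasurableSpace X] {μ : Measure X}
    {f g : Lp ℝ 1 μ} (hf : 0 ≤ f) (hg : 0 ≤ g) : ‖f + g‖ = ‖f‖ + ‖g‖ := by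
  have hf' : 0 ≤ᵐ[μ] f := (Lp.coeFn_nonneg f).mpr hf
  have hg' : 0 ≤ᵐ[μ] g := (Lp.coeFn_nonneg g).mpr hg
  rw [L1.norm_eq_integral_norm, L1.norm_eq_integral_norm, L1.norm_eq_integral_norm,
    ← integral_add (L1.integrable_coeFn f).norm (L1.integrable_coeFn g).norm]
  refine integral_congr_ae ?_
  filter_upwards [Lp.coeFn_add f g, hf', hg'] with a ha hfa hga
  simp only [Pi.zero_apply] at hfa hga
  rw [ha, Pi.add_apply, Real.norm_of_nonneg (add_nonneg hfa hga),
    Real.norm_of_nonneg hfa, Real.norm_of_nonneg hga]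

private lemma smul_nonneg_Lp {X : Type*} [MeasurableSpace X] {μ : Measure X} {c : ℝ}
    (hc : 0 ≤ c) {f : Lp ℝ 1 μ} (hf : 0 ≤ f) : 0 ≤ c • f := by
  rw [← Lp.coeFn_nonneg]
  filter_upwards [Lp.coeFn_smul c f, (Lp.coeFn_nonneg f).mpr hf] with a ha hfa
  simp only [Pi.zero_apply] at hfa ⊢
  rw [ha]
  exact mul_nonneg hc hfa

/-- For quadratic stochastic operators `Q₁, Q₂` on `L¹(X,𝒜,μ)`,
`(1/4)·d̂_u(Q₁,Q₂) ≤ d_u(Q₁,Q₂) ≤ d̂_u(Q₁,Q₂)`, so the two uniform metrics are equivalent. -/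
theorem du_dhat_equivalent {X : Type*} [MeasurableSpace X] (μ : Measure X) [SigmaFinite μ]
    (Q₁ Q₂ : Lp ℝ 1 μ → Lp ℝ 1 μ → Lp ℝ 1 μ)
    (h₁ : IsQSO μ Q₁) (h₂ : IsQSO μ Q₂) :
    (1 / 4 : ℝ) * dhat μ Q₁ Q₂ ≤ du μ Q₁ Q₂ ∧ du μ Q₁ Q₂ ≤ dhat μ Q₁ Q₂ := by
  have hbound : ∀ f g : Lp ℝ 1 μ, f ∈ Density μ → g ∈ Density μ →
      ‖Q₁ f g - Q₂ f g‖ ≤ 2 := by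
    intro f g hf hg
    calc ‖Q₁ f g - Q₂ f g‖ ≤ ‖Q₁ f g‖ + ‖Q₂ f g‖ := norm_sub_le _ _
    _ = 2 := by
      rw [h₁.norm_mul f g hf.1 hg.1, h₂.norm_mul f g hf.1 hg.1, hf.2, hg.2]; norm_num
  have hbddDu : BddAbove (Set.range fun f : Density μ => ‖Q₁ f f - Q₂ f f‖) := by
    refine ⟨2, ?_⟩; rintro x ⟨f, rfl⟩; exact hbound f f f.2 f.2
  have hle_du : ∀ f : Density μ, ‖Q₁ (f : Lp ℝ 1 μ) f - Q₂ f f‖ ≤ du μ Q₁ Q₂ :=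
    fun f => le_ciSup hbddDu f
  have hdu_nonneg : 0 ≤ du μ Q₁ Q₂ := Real.iSup_nonneg fun f => norm_nonneg _
  have hdhat_nonneg : 0 ≤ dhat μ Q₁ Q₂ :=
    Real.iSup_nonneg fun f => Real.iSup_nonneg fun g => norm_nonneg _
  constructor
  · -- (1/4) * dhat ≤ du
    have key : ∀ f g : Density μ, ‖Q₁ (f : Lp ℝ 1 μ) g - Q₂ f g‖ ≤ 3 * du μ Q₁ Q₂ := by
      rintro ⟨f, hf⟩ ⟨g, hg⟩
      set m : Lp ℝ 1 μ := (2:ℝ)⁻¹ • (f + g) with hm_def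
      have hm : m ∈ Density μ := by
        refine ⟨smul_nonneg_Lp (by norm_num) (add_nonneg hf.1 hg.1), ?_⟩
        rw [norm_smul, norm_add_of_nonneg' hf.1 hg.1, hf.2, hg.2]
        norm_num
      have expand : ∀ Q : Lp ℝ 1 μ → Lp ℝ 1 μ → Lp ℝ 1 μ, IsQSO μ Q →
          Q m m = (4⁻¹:ℝ) • Q f f + (2⁻¹:ℝ) • Q f g + (4⁻¹:ℝ) • Q g g := by
        intro Q hQ
        rw [hm_def, hQ.smul_left, hQ.smul_right, hQ.add_left, hQ.add_right, hQ.add_right,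
          hQ.symm g f]
        module
      have hdiff : Q₁ f g - Q₂ f g =
          (2:ℝ) • (Q₁ m m - Q₂ m m) - (2⁻¹:ℝ) • (Q₁ f f - Q₂ f f)
            - (2⁻¹:ℝ) • (Q₁ g g - Q₂ g g) := by
        rw [expand Q₁ h₁, expand Q₂ h₂]
        module
      have h1 : ‖Q₁ m m - Q₂ m m‖ ≤ du μ Q₁ Q₂ := hle_du ⟨m, hm⟩
      have h2 : ‖Q₁ f f - Q₂ f f‖ ≤ du μ Q₁ Q₂ := hle_du ⟨f, hf⟩
      have h3 : ‖Q₁ g g - Q₂ g g‖ ≤ du μ Q₁ Q₂ := hle_du ⟨g, hg⟩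
      calc ‖Q₁ f g - Q₂ f g‖
          ≤ ‖(2:ℝ) • (Q₁ m m - Q₂ m m) - (2⁻¹:ℝ) • (Q₁ f f - Q₂ f f)‖
            + ‖(2⁻¹:ℝ) • (Q₁ g g - Q₂ g g)‖ := by rw [hdiff]; exact norm_sub_le _ _
        _ ≤ ‖(2:ℝ) • (Q₁ m m - Q₂ m m)‖ + ‖(2⁻¹:ℝ) • (Q₁ f f - Q₂ f f)‖
            + ‖(2⁻¹:ℝ) • (Q₁ g g - Q₂ g g)‖ := by
            gcongr; exact norm_sub_le _ _
        _ = 2 * ‖Q₁ m m - Q₂ m m‖ + 2⁻¹ * ‖Q₁ f f - Q₂ f f‖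
            + 2⁻¹ * ‖Q₁ g g - Q₂ g g‖ := by
            rw [norm_smul, norm_smul, norm_smul]; norm_num
        _ ≤ 3 * du μ Q₁ Q₂ := by linarith
    have hdhat_le : dhat μ Q₁ Q₂ ≤ 3 * du μ Q₁ Q₂ := by
      refine Real.iSup_le (fun f => Real.iSup_le (fun g => key f g) (by linarith))
        (by linarith)
    linarith
  · -- du ≤ dhat
    refine Real.iSup_le (fun f => ?_) hdhat_nonneg
    have h1 : ‖Q₁ (f : Lp ℝ 1 μ) f - Q₂ f f‖ ≤ ⨆ g : Density μ, ‖Q₁ (f : Lp ℝ 1 μ) g - Q₂ f g‖ := by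
      refine le_ciSup (f := fun g : Density μ => ‖Q₁ (f : Lp ℝ 1 μ) g - Q₂ f g‖) ?_ f
      refine ⟨2, ?_⟩; rintro x ⟨g, rfl⟩; exact hbound f g f.2 g.2
    refine h1.trans ?_
    refine le_ciSup (f := fun f : Density μ => ⨆ g : Density μ, ‖Q₁ (f : Lp ℝ 1 μ) g - Q₂ f g‖) ?_ f
    refine ⟨2, ?_⟩; rintro x ⟨f', rfl⟩
    exact Real.iSup_le (fun g => hbound f' g f'.2 g.2) (by norm_num)
end

section
/- Assume dim L¹ > 1. Define Q♭(f,g) := f·(∫_X g dμ) and Q♯(f,g) := g·(∫_X f dμ) for f,g ∈ L¹. Then Q♭ and Q♯ are nonsymmetric quadratic stochastic operators (i.e., bilinear, positivity-preserving, and ‖Q(f,g)‖₁ = ‖f‖₁‖g‖₁ for f,g ≥ 0), Q♭ ≠ Q♯, and yet d_u(Q♭,Q♯) := sup_{f∈𝒟} ‖Q♭(f,f) − Q♯(f,f)‖₁ = 0; hence d_u is not a metric on the class of nonsymmetric quadratic stochastic operators. -/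
open MeasureTheory Filter Topology

/-- A nonsymmetric quadratic stochastic operator: bilinear, positivity preserving and
`‖Q(f,g)‖₁ = ‖f‖₁ ‖g‖₁` for `f, g ≥ 0` (symmetry is not assumed). -/
structure IsNSQSO {X : Type*} [MeasurableSpace X] (μ : Measure X)
    (Q : Lp ℝ 1 μ → Lp ℝ 1 μ → Lp ℝ 1 μ) : Prop where
  add_left : ∀ f f' g, Q (f + f') g = Q f g + Q f' g
  smul_left : ∀ (c : ℝ) f g, Q (c • f) g = c • Q f g
  add_right : ∀ f g g', Q f (g + g') = Q f g + Q f g'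
  smul_right : ∀ (c : ℝ) f g, Q f (c • g) = c • Q f g
  nonneg : ∀ f g, 0 ≤ f → 0 ≤ g → 0 ≤ Q f g
  norm_mul : ∀ f g, 0 ≤ f → 0 ≤ g → ‖Q f g‖ = ‖f‖ * ‖g‖

section Aux
variable {X : Type*} [MeasurableSpace X] {μ : Measure X}

lemma integral_Lp1_nonneg {g : Lp ℝ 1 μ} (hg : 0 ≤ g) : 0 ≤ ∫ a, g a ∂μ :=
  integral_nonneg_of_ae ((Lp.coeFn_nonneg g).mpr hg)

lemma integral_Lp1_eq_norm {g : Lp ℝ 1 μ} (hg : 0 ≤ g) : ∫ a, g a ∂μ = ‖g‖ := by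
  rw [L1.norm_eq_integral_norm]
  refine integral_congr_ae ?_
  filter_upwards [(Lp.coeFn_nonneg g).mpr hg] with a ha
  simp [Real.norm_eq_abs, abs_of_nonneg ha]

lemma integral_Lp1_add (f g : Lp ℝ 1 μ) :
    ∫ a, (f + g) a ∂μ = (∫ a, f a ∂μ) + ∫ a, g a ∂μ := by
  rw [integral_congr_ae (Lp.coeFn_add f g)]
  exact integral_add (L1.integrable_coeFn f) (L1.integrable_coeFn g)

lemma integral_Lp1_smul (c : ℝ) (f : Lp ℝ 1 μ) :
    ∫ a, (c • f) a ∂μ = c * ∫ a, f a ∂μ := by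
  rw [integral_congr_ae (Lp.coeFn_smul c f)]
  simp only [Pi.smul_apply, smul_eq_mul]
  exact integral_const_mul c _

lemma smul_Lp1_nonneg {c : ℝ} (hc : 0 ≤ c) {f : Lp ℝ 1 μ} (hf : 0 ≤ f) :
    0 ≤ c • f := by
  rw [← Lp.coeFn_nonneg]
  filter_upwards [Lp.coeFn_smul c f, (Lp.coeFn_nonneg f).mpr hf] with a ha hfa
  rw [ha]
  exact mul_nonneg hc hfa

end Aux

/-- If `dim L¹ > 1` then `Q♭(f,g) = (∫ g dμ)·f` and `Q♯(f,g) = (∫ f dμ)·g`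
are nonsymmetric quadratic stochastic operators with `Q♭ ≠ Q♯` but
`d_u(Q♭,Q♯) = sup_{f∈𝒟} ‖Q♭(f,f) - Q♯(f,f)‖₁ = 0`; hence `d_u` is not a metric on the
class of nonsymmetric quadratic stochastic operators. -/
theorem du_not_metric_on_nonsymmetric {X : Type*} [MeasurableSpace X]
    (μ : Measure X) [SigmaFinite μ]
    (hdim : 1 < Module.rank ℝ (Lp ℝ 1 μ))
    (Qb Qs : Lp ℝ 1 μ → Lp ℝ 1 μ → Lp ℝ 1 μ)
    (hQb : ∀ f g : Lp ℝ 1 μ, Qb f g = (∫ a, g a ∂μ) • f)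
    (hQs : ∀ f g : Lp ℝ 1 μ, Qs f g = (∫ a, f a ∂μ) • g) :
    IsNSQSO μ Qb ∧ IsNSQSO μ Qs ∧ Qb ≠ Qs ∧
      (⨆ f : Density μ, ‖Qb f f - Qs f f‖) = 0 := by
  have hnsb : IsNSQSO μ Qb := by
    constructor
    · intro f f' g; rw [hQb, hQb, hQb, smul_add]
    · intro c f g; rw [hQb, hQb, smul_comm]
    · intro f g g'; rw [hQb, hQb, hQb, integral_Lp1_add, add_smul]
    · intro c f g; rw [hQb, hQb, integral_Lp1_smul, mul_smul]
    · intro f g hf hg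
      rw [hQb]
      exact smul_Lp1_nonneg (integral_Lp1_nonneg hg) hf
    · intro f g hf hg
      rw [hQb, norm_smul, Real.norm_eq_abs,
        abs_of_nonneg (integral_Lp1_nonneg hg), integral_Lp1_eq_norm hg, mul_comm]
  have hnss : IsNSQSO μ Qs := by
    constructor
    · intro f f' g; rw [hQs, hQs, hQs, integral_Lp1_add, add_smul]
    · intro c f g; rw [hQs, hQs, integral_Lp1_smul, mul_smul]
    · intro f g g'; rw [hQs, hQs, hQs, smul_add]
    · intro c f g; rw [hQs, hQs, smul_comm]
    · intro f g hf hg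
      rw [hQs]
      exact smul_Lp1_nonneg (integral_Lp1_nonneg hf) hg
    · intro f g hf hg
      rw [hQs, norm_smul, Real.norm_eq_abs,
        abs_of_nonneg (integral_Lp1_nonneg hf), integral_Lp1_eq_norm hf]
  refine ⟨hnsb, hnss, ?_, ?_⟩
  · -- Qb ≠ Qs
    intro hEq
    have key : ∀ f g : Lp ℝ 1 μ, (∫ a, g a ∂μ) • f = (∫ a, f a ∂μ) • g := by
      intro f g
      rw [← hQb, ← hQs, hEq]
    have hnt : Nontrivial (Lp ℝ 1 μ) :=
      rank_pos_iff_nontrivial.mp (lt_trans zero_lt_one hdim)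
    obtain ⟨h, hh⟩ := exists_ne (0 : Lp ℝ 1 μ)
    set g₀ : Lp ℝ 1 μ := |h| with hg₀
    have hg₀nn : (0 : Lp ℝ 1 μ) ≤ g₀ := abs_nonneg h
    have hintne : (∫ a, g₀ a ∂μ) ≠ 0 := by
      rw [integral_Lp1_eq_norm hg₀nn, hg₀, norm_abs_eq_norm]
      exact norm_ne_zero_iff.mpr hh
    let T : Lp ℝ 1 μ →ₗ[ℝ] ℝ :=
      { toFun := fun f => ∫ a, f a ∂μ
        map_add' := integral_Lp1_add
        map_smul' := fun c f => integral_Lp1_smul c f }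
    have hTinj : Function.Injective T := by
      rw [← LinearMap.ker_eq_bot, LinearMap.ker_eq_bot']
      intro f hf
      have hkey := key f g₀
      rw [show (∫ a, f a ∂μ) = 0 from hf, zero_smul] at hkey
      rcases smul_eq_zero.mp hkey with h0 | h0
      · exact absurd h0 hintne
      · exact h0
    have hle := T.lift_rank_le_of_injective hTinj
    rw [Module.rank_self] at hle
    have h1 : Module.rank ℝ (Lp ℝ 1 μ) ≤ 1 := by
      simpa using hle
    exact absurd hdim (not_lt.mpr h1)
  · have hzero : ∀ f : Density μ, ‖Qb f f - Qs f f‖ = (0 : ℝ) := by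
      intro f
      rw [hQb, hQs, sub_self, norm_zero]
    simp only [hzero]
    exact Real.iSup_const_zero
end

section
/- Fix a measurable countable partition ξ = {B_k}_{k≥1} of X with 0 < μ(B_k) < ∞ for all k. For a quadratic stochastic operator Q on L¹ define 𝔼Q on ℓ¹ by (𝔼Q(x,y))_i := ∫_{B_i} Q( Σ_k (x_k/μ(B_k))·1_{B_k} , Σ_l (y_l/μ(B_l))·1_{B_l} ) dμ. Then for any two quadratic stochastic operators Q₁, Q₂ on L¹, sup{ ‖𝔼Q₁(x,x) − 𝔼Q₂(x,x)‖_{ℓ¹} : x ∈ ℓ¹, x ≥ 0, ‖x‖_{ℓ¹} = 1 } ≤ sup_{f∈𝒟} ‖Q₁(f,f) − Q₂(f,f)‖₁; in particular the map Q ↦ 𝔼Q is continuous for the metric d_u. -/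
/-! The step function `S x` is a density: its block `B_k` carries mass `x_k`, and these sum to 1.
Hence `g := Q₁(S x, S x) - Q₂(S x, S x)` satisfies `‖g‖₁ ≤ d_u(Q₁, Q₂)`, and since the blocks
are disjoint, `∑ᵢ |∫_{Bᵢ} g| ≤ ∑ᵢ ∫_{Bᵢ} |g| ≤ ‖g‖₁`. -/

open MeasureTheory Filter Topology

namespace MeasureTheory

variable {X : Type*} [MeasurableSpace X] {μ : Measure X}

theorem integral_indicator_const_div_measureReal {s : Set X} (hs : MeasurableSet s)
    (hμs : μ.real s ≠ 0) (c : ℝ) :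
    ∫ a, s.indicator (fun _ => c / μ.real s) a ∂μ = c := by
  rw [integral_indicator_const _ hs, smul_eq_mul, mul_div_cancel₀ _ hμs]

theorem integrable_indicator_const_div_measureReal {s : Set X} (hs : MeasurableSet s)
    (hμs : μ.real s ≠ 0) (c : ℝ) :
    Integrable (s.indicator fun _ => c / μ.real s) μ :=
  (integrable_indicator_iff hs).2 <| integrableOn_const (ENNReal.toReal_ne_zero.1 hμs).2

variable {ι : Type*} {ξ : ι → Set X} {x : ι → ℝ}

noncomputable def stepFunction (μ : Measure X) (ξ : ι → Set X) (x : ι → ℝ) (a : X) : ℝ :=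
  ∑' k, (ξ k).indicator (fun _ => x k / μ.real (ξ k)) a

theorem stepFunction_nonneg (hx : 0 ≤ x) (a : X) : 0 ≤ stepFunction μ ξ x a :=
  tsum_nonneg fun k => Set.indicator_nonneg (fun _ _ => div_nonneg (hx k) measureReal_nonneg) a

theorem integral_stepFunction [Countable ι] (hξ : ∀ k, MeasurableSet (ξ k))
    (hμξ : ∀ k, μ.real (ξ k) ≠ 0) (hx : Summable fun k => |x k|) :
    ∫ a, stepFunction μ ξ x a ∂μ = ∑' k, x k := by
  have hnorm : ∀ k, ∫ a, ‖(ξ k).indicator (fun _ => x k / μ.real (ξ k)) a‖ ∂μ = |x k| := by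
    intro k
    simp_rw [norm_indicator_eq_indicator_norm, norm_div, Real.norm_eq_abs,
      abs_of_nonneg (measureReal_nonneg (μ := μ) (s := ξ k))]
    exact integral_indicator_const_div_measureReal (hξ k) (hμξ k) _
  unfold stepFunction
  rw [← integral_tsum_of_summable_integral_norm
    (fun k => integrable_indicator_const_div_measureReal (hξ k) (hμξ k) _)
    (by simpa only [hnorm] using hx)]
  exact tsum_congr fun k => integral_indicator_const_div_measureReal (hξ k) (hμξ k) _

theorem mem_density_of_ae_eq_stepFunction [Countable ι] {f : Lp ℝ 1 μ}
    (hf : (f : X → ℝ) =ᵐ[μ] stepFunction μ ξ x) (hξ : ∀ k, MeasurableSet (ξ k))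
    (hμξ : ∀ k, μ.real (ξ k) ≠ 0) (hx0 : 0 ≤ x) (hx1 : HasSum x 1) : f ∈ Density μ := by
  have hxs : Summable fun k => |x k| := by
    simpa only [abs_of_nonneg (hx0 _)] using hx1.summable
  refine ⟨?_, ?_⟩
  · rw [← Lp.coeFn_nonneg]
    filter_upwards [hf] with a ha
    exact ha ▸ stepFunction_nonneg hx0 a
  · rw [L1.norm_eq_integral_norm, ← hx1.tsum_eq, ← integral_stepFunction hξ hμξ hxs]
    refine integral_congr_ae ?_
    filter_upwards [hf] with a ha
    rw [ha, Real.norm_of_nonneg (stepFunction_nonneg hx0 a)]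

theorem tsum_abs_setIntegral_le_integral_abs [Countable ι] {f : X → ℝ} (hf : Integrable f μ)
    (hξ : ∀ k, MeasurableSet (ξ k)) (hd : Pairwise (Function.onFun Disjoint ξ)) :
    ∑' k, |∫ a in ξ k, f a ∂μ| ≤ ∫ a, |f a| ∂μ := by
  have hsum := hasSum_integral_iUnion hξ hd hf.abs.integrableOn
  have habs : ∀ k, |∫ a in ξ k, f a ∂μ| ≤ ∫ a in ξ k, |f a| ∂μ := fun k =>
    abs_integral_le_integral_abs
  calc ∑' k, |∫ a in ξ k, f a ∂μ|
      ≤ ∑' k, ∫ a in ξ k, |f a| ∂μ :=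
        (hsum.summable.of_nonneg_of_le (fun _ => abs_nonneg _) habs).tsum_le_tsum habs
          hsum.summable
    _ = ∫ a in ⋃ k, ξ k, |f a| ∂μ := hsum.tsum_eq
    _ ≤ ∫ a, |f a| ∂μ := setIntegral_le_integral hf.abs (.of_forall fun _ => abs_nonneg _)

theorem tsum_abs_setIntegral_le_norm [Countable ι] (f : Lp ℝ 1 μ)
    (hξ : ∀ k, MeasurableSet (ξ k)) (hd : Pairwise (Function.onFun Disjoint ξ)) :
    ∑' k, |∫ a in ξ k, f a ∂μ| ≤ ‖f‖ := by
  simpa only [L1.norm_eq_integral_norm, Real.norm_eq_abs] using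
    tsum_abs_setIntegral_le_integral_abs (L1.integrable_coeFn f) hξ hd

theorem setIntegral_coeFn_sub (f g : Lp ℝ 1 μ) (s : Set X) :
    ∫ a in s, (f - g : Lp ℝ 1 μ) a ∂μ = (∫ a in s, f a ∂μ) - ∫ a in s, g a ∂μ := by
  rw [← integral_sub (L1.integrable_coeFn f).integrableOn (L1.integrable_coeFn g).integrableOn]
  exact integral_congr_ae (ae_restrict_of_ae (Lp.coeFn_sub f g))

end MeasureTheory

theorem IsQSO.norm_sub_le_du {X : Type*} [MeasurableSpace X] {μ : Measure X}
    {Q₁ Q₂ : Lp ℝ 1 μ → Lp ℝ 1 μ → Lp ℝ 1 μ} (h₁ : IsQSO μ Q₁) (h₂ : IsQSO μ Q₂)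
    {f : Lp ℝ 1 μ} (hf : f ∈ Density μ) : ‖Q₁ f f - Q₂ f f‖ ≤ du μ Q₁ Q₂ := by
  refine le_ciSup (f := fun f : Density μ => ‖Q₁ f f - Q₂ f f‖) ⟨2, ?_⟩ ⟨f, hf⟩
  rintro r ⟨⟨f, hf0, hf1⟩, rfl⟩
  calc ‖Q₁ f f - Q₂ f f‖ ≤ ‖Q₁ f f‖ + ‖Q₂ f f‖ := norm_sub_le _ _
    _ = 2 := by rw [h₁.norm_mul f f hf0 hf0, h₂.norm_mul f f hf0 hf0, hf1]; norm_num

theorem ellOne_correspondence_continuous_general {X : Type*} [MeasurableSpace X]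
    (μ : Measure X)
    (ξ : ℕ → Set X) (hmeas : ∀ k, MeasurableSet (ξ k))
    (hdisj : Pairwise (Function.onFun Disjoint ξ))
    (hpos : ∀ k, 0 < μ (ξ k)) (hfin : ∀ k, μ (ξ k) < ⊤)
    (S : (ℕ → ℝ) → Lp ℝ 1 μ)
    (hS : ∀ x : ℕ → ℝ, Summable (fun k => |x k|) →
      (S x : X → ℝ) =ᵐ[μ]
        fun a => ∑' k, (ξ k).indicator (fun _ => x k / (μ (ξ k)).toReal) a)
    (Q₁ Q₂ : Lp ℝ 1 μ → Lp ℝ 1 μ → Lp ℝ 1 μ)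
    (h₁ : IsQSO μ Q₁) (h₂ : IsQSO μ Q₂)
    (x : ℕ → ℝ) (hx0 : ∀ k, 0 ≤ x k)
    (hxs : Summable (fun k => |x k|)) (hx1 : (∑' k, |x k|) = 1) :
    (∑' i, |(∫ a in ξ i, (Q₁ (S x) (S x) : Lp ℝ 1 μ) a ∂μ) -
             ∫ a in ξ i, (Q₂ (S x) (S x) : Lp ℝ 1 μ) a ∂μ|)
      ≤ du μ Q₁ Q₂ := by
  have hμξ : ∀ k, μ.real (ξ k) ≠ 0 := fun k =>
    ENNReal.toReal_ne_zero.2 ⟨(hpos k).ne', (hfin k).ne⟩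
  have hx : HasSum x 1 := by
    rw [← hx1]
    simpa only [abs_of_nonneg (hx0 _)] using hxs.hasSum
  have hSx : S x ∈ Density μ := mem_density_of_ae_eq_stepFunction (hS x hxs) hmeas hμξ hx0 hx
  calc _ = ∑' i, |∫ a in ξ i, (Q₁ (S x) (S x) - Q₂ (S x) (S x) : Lp ℝ 1 μ) a ∂μ| := by
        simp only [setIntegral_coeFn_sub]
    _ ≤ ‖Q₁ (S x) (S x) - Q₂ (S x) (S x)‖ := tsum_abs_setIntegral_le_norm _ hmeas hdisj
    _ ≤ du μ Q₁ Q₂ := h₁.norm_sub_le_du h₂ hSx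

/-- Fix a measurable countable partition `ξ = {B_k}` of `X` consistent with `μ`
(`0 < μ(B_k) < ∞`). Let `S x = Σ_k (x_k/μ(B_k))·1_{B_k} ∈ L¹` (characterized a.e.) and for a
QSO `Q` let `𝔼Q(x,y)_i = ∫_{B_i} Q(S x, S y) dμ`. Then for any two QSOs `Q₁, Q₂` and any
`x ∈ ℓ¹` with `x ≥ 0`, `‖x‖_{ℓ¹} = 1`, one has
`‖𝔼Q₁(x,x) − 𝔼Q₂(x,x)‖_{ℓ¹} ≤ sup_{f∈𝒟} ‖ℚ₁(f) − ℚ₂(f)‖₁ = d_u(Q₁,Q₂)`;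
in particular `Q ↦ 𝔼Q` is continuous for `d_u`. -/
theorem ellOne_correspondence_continuous {X : Type*} [MeasurableSpace X]
    (μ : Measure X) [SigmaFinite μ]
    (ξ : ℕ → Set X) (hmeas : ∀ k, MeasurableSet (ξ k))
    (hdisj : Pairwise (Function.onFun Disjoint ξ))
    (hcover : (⋃ k, ξ k) = Set.univ)
    (hpos : ∀ k, 0 < μ (ξ k)) (hfin : ∀ k, μ (ξ k) < ⊤)
    (S : (ℕ → ℝ) → Lp ℝ 1 μ)
    (hS : ∀ x : ℕ → ℝ, Summable (fun k => |x k|) →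
      (S x : X → ℝ) =ᵐ[μ]
        fun a => ∑' k, (ξ k).indicator (fun _ => x k / (μ (ξ k)).toReal) a)
    (Q₁ Q₂ : Lp ℝ 1 μ → Lp ℝ 1 μ → Lp ℝ 1 μ)
    (h₁ : IsQSO μ Q₁) (h₂ : IsQSO μ Q₂)
    (x : ℕ → ℝ) (hx0 : ∀ k, 0 ≤ x k)
    (hxs : Summable (fun k => |x k|)) (hx1 : (∑' k, |x k|) = 1) :
    (∑' i, |(∫ a in ξ i, (Q₁ (S x) (S x) : Lp ℝ 1 μ) a ∂μ) -
             ∫ a in ξ i, (Q₂ (S x) (S x) : Lp ℝ 1 μ) a ∂μ|)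
      ≤ du μ Q₁ Q₂ :=
  ellOne_correspondence_continuous_general μ ξ hmeas hdisj hpos hfin S hS Q₁ Q₂ h₁ h₂ x hx0 hxs hx1
end

section
/- Fix a density h ∈ 𝒟, let Q⋄(f,g) := (∫_X f dμ)(∫_X g dμ)·h, and let Q be a quadratic stochastic operator with d̂_u(Q,Q⋄) = ε. Then for all densities u, v lying in the image ℚ(𝒟) (or its closure), ‖ℚ(u) − ℚ(v)‖₁ ≤ 3ε·‖u − v‖₁; moreover the diameter of ℚ(𝒟) in the L¹ norm is at most 2ε. -/
open MeasureTheory Filter Topology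

/-! For densities `f, g` we have `Q⋄(f,g) = h`, so every `Q(f,g)` lies within `ε` of `h`; the
diameter bound follows. For the Lipschitz bound write `ℚ(u) - ℚ(v) = Q(u - v, u + v)`. Since
`∫ (u - v) = 0`, the positive and negative parts of `u - v` have the same mass `‖u - v‖ / 2`, so
`u - v = (‖u - v‖ / 2) (d₁ - d₂)` with densities `d₁, d₂`, while `u + v = 2 s` for the density
`s = (u + v) / 2`. Hence `ℚ(u) - ℚ(v) = ‖u - v‖ ((Q(d₁,s) - h) - (Q(d₂,s) - h))` has norm at most
`2 ε ‖u - v‖`. The closure of `ℚ(𝒟)` stays in the closed set `𝒟`. -/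

namespace MeasureTheory

variable {X : Type*} [MeasurableSpace X] {μ : Measure X}

namespace Lp

instance {p : ENNReal} : PosSMulMono ℝ (Lp ℝ p μ) where
  smul_le_smul_of_nonneg_left c hc f g hfg := by
    rw [← coeFn_le] at hfg ⊢
    filter_upwards [hfg, coeFn_smul c f, coeFn_smul c g] with a ha hf hg
    rw [hf, hg]
    exact mul_le_mul_of_nonneg_left ha hc

end Lp

namespace L1

lemma integral_coeFn_eq_norm_of_nonneg {f : Lp ℝ 1 μ} (hf : 0 ≤ f) : ∫ a, f a ∂μ = ‖f‖ := by
  rw [norm_eq_integral_norm]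
  refine integral_congr_ae ?_
  filter_upwards [(Lp.coeFn_nonneg f).mpr hf] with a ha
  exact (Real.norm_of_nonneg ha).symm

lemma integral_coeFn_sub (f g : Lp ℝ 1 μ) :
    ∫ a, (f - g) a ∂μ = ∫ a, f a ∂μ - ∫ a, g a ∂μ := by
  simp only [← integral_eq_integral, integral_sub]

lemma norm_add_of_nonneg {f g : Lp ℝ 1 μ} (hf : 0 ≤ f) (hg : 0 ≤ g) :
    ‖f + g‖ = ‖f‖ + ‖g‖ := by
  simp only [← integral_coeFn_eq_norm_of_nonneg, hf, hg, add_nonneg, ← integral_eq_integral,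
    integral_add]

end L1

end MeasureTheory

section

variable {X : Type*} [MeasurableSpace X] {μ : Measure X}

lemma integral_eq_one_of_mem_density {f : Lp ℝ 1 μ} (hf : f ∈ Density μ) :
    ∫ a, f a ∂μ = 1 := by
  rw [L1.integral_coeFn_eq_norm_of_nonneg hf.1, hf.2]

lemma isClosed_density : IsClosed (Density μ) := by
  rw [Density, Set.ofPred_and]
  exact isClosed_Ici.inter (isClosed_eq continuous_norm continuous_const)

lemma convex_density : Convex ℝ (Density μ) := by
  intro f hf g hg a b ha hb hab
  have hfa : 0 ≤ a • f := smul_nonneg ha hf.1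
  have hgb : 0 ≤ b • g := smul_nonneg hb hg.1
  refine ⟨add_nonneg hfa hgb, ?_⟩
  rw [L1.norm_add_of_nonneg hfa hgb, norm_smul, norm_smul, hf.2, hg.2, Real.norm_of_nonneg ha,
    Real.norm_of_nonneg hb, mul_one, mul_one, hab]

lemma inv_norm_smul_mem_density {f : Lp ℝ 1 μ} (hf : 0 ≤ f) (hf0 : f ≠ 0) :
    ‖f‖⁻¹ • f ∈ Density μ :=
  ⟨smul_nonneg (inv_nonneg.mpr (norm_nonneg f)) hf, norm_smul_inv_norm hf0⟩

lemma exists_mem_density_sub_eq_smul {u v : Lp ℝ 1 μ} (hu : u ∈ Density μ) (hv : v ∈ Density μ) :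
    ∃ d₁ ∈ Density μ, ∃ d₂ ∈ Density μ, u - v = (‖u - v‖ / 2) • (d₁ - d₂) := by
  set w := u - v
  have hparts : ‖w⁺‖ = ‖w⁻‖ := by
    have hw : ∫ a, w a ∂μ = 0 := by
      rw [L1.integral_coeFn_sub, integral_eq_one_of_mem_density hu,
        integral_eq_one_of_mem_density hv, sub_self]
    rwa [← posPart_sub_negPart w, L1.integral_coeFn_sub,
      L1.integral_coeFn_eq_norm_of_nonneg (posPart_nonneg w),
      L1.integral_coeFn_eq_norm_of_nonneg (negPart_nonneg w), sub_eq_zero] at hw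
  have hnorm : ‖w‖ / 2 = ‖w⁺‖ := by
    rw [← norm_abs_eq_norm, ← posPart_add_negPart,
      L1.norm_add_of_nonneg (posPart_nonneg w) (negPart_nonneg w), ← hparts]
    ring
  by_cases hw0 : w⁺ = 0
  · rw [hw0, norm_zero] at hnorm
    refine ⟨u, hu, u, hu, ?_⟩
    rw [sub_self, smul_zero, ← norm_eq_zero]
    linarith
  · have hw0' : w⁻ ≠ 0 := by rwa [← norm_ne_zero_iff, ← hparts, norm_ne_zero_iff]
    refine ⟨_, inv_norm_smul_mem_density (posPart_nonneg w) hw0,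
      _, inv_norm_smul_mem_density (negPart_nonneg w) hw0', ?_⟩
    rw [hnorm, ← hparts, ← smul_sub, smul_smul, mul_inv_cancel₀ (norm_ne_zero_iff.mpr hw0),
      one_smul, posPart_sub_negPart]

lemma dhat_nonneg (Q₁ Q₂ : Lp ℝ 1 μ → Lp ℝ 1 μ → Lp ℝ 1 μ) : 0 ≤ dhat μ Q₁ Q₂ :=
  Real.iSup_nonneg fun _ => Real.iSup_nonneg fun _ => norm_nonneg _

lemma norm_sub_le_dhat {Q₁ Q₂ : Lp ℝ 1 μ → Lp ℝ 1 μ → Lp ℝ 1 μ} {B : ℝ}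
    (hB : ∀ f ∈ Density μ, ∀ g ∈ Density μ, ‖Q₁ f g - Q₂ f g‖ ≤ B) {f g : Lp ℝ 1 μ}
    (hf : f ∈ Density μ) (hg : g ∈ Density μ) : ‖Q₁ f g - Q₂ f g‖ ≤ dhat μ Q₁ Q₂ := by
  have hB0 : 0 ≤ B := (norm_nonneg _).trans (hB f hf g hg)
  have hbdd : ∀ f ∈ Density μ, BddAbove (Set.range fun g : Density μ => ‖Q₁ f g - Q₂ f g‖) :=
    fun f hf => ⟨B, Set.forall_mem_range.mpr fun g => hB f hf g g.2⟩
  refine (le_ciSup (hbdd f hf) ⟨g, hg⟩).trans (le_ciSup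
    (f := fun f : Density μ => ⨆ g : Density μ, ‖Q₁ f g - Q₂ f g‖) ?_ ⟨f, hf⟩)
  exact ⟨B, Set.forall_mem_range.mpr fun f => Real.iSup_le (fun g => hB f f.2 g g.2) hB0⟩

namespace IsQSO

variable {Q : Lp ℝ 1 μ → Lp ℝ 1 μ → Lp ℝ 1 μ}

def toLinearMap₂ (hQ : IsQSO μ Q) : Lp ℝ 1 μ →ₗ[ℝ] Lp ℝ 1 μ →ₗ[ℝ] Lp ℝ 1 μ :=
  LinearMap.mk₂ ℝ Q hQ.add_left hQ.smul_left hQ.add_right hQ.smul_right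

lemma toLinearMap₂_apply (hQ : IsQSO μ Q) (f g : Lp ℝ 1 μ) : hQ.toLinearMap₂ f g = Q f g := rfl

lemma QQ_sub_QQ (hQ : IsQSO μ Q) (u v : Lp ℝ 1 μ) : QQ Q u - QQ Q v = Q (u - v) (u + v) := by
  simp only [QQ, ← hQ.toLinearMap₂_apply, map_sub, map_add, LinearMap.sub_apply]
  rw [hQ.toLinearMap₂_apply v u, hQ.symm v u, hQ.toLinearMap₂_apply u v]
  abel

lemma mem_density (hQ : IsQSO μ Q) {f g : Lp ℝ 1 μ} (hf : f ∈ Density μ) (hg : g ∈ Density μ) :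
    Q f g ∈ Density μ :=
  ⟨hQ.nonneg f g hf.1 hg.1, by rw [hQ.norm_mul f g hf.1 hg.1, hf.2, hg.2, one_mul]⟩

lemma norm_QQ_sub_QQ_le (hQ : IsQSO μ Q) {c : Lp ℝ 1 μ} {ε : ℝ}
    (hc : ∀ f ∈ Density μ, ∀ g ∈ Density μ, ‖Q f g - c‖ ≤ ε) {u v : Lp ℝ 1 μ}
    (hu : u ∈ Density μ) (hv : v ∈ Density μ) : ‖QQ Q u - QQ Q v‖ ≤ 2 * ε * ‖u - v‖ := by
  obtain ⟨d₁, hd₁, d₂, hd₂, huv⟩ := exists_mem_density_sub_eq_smul hu hv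
  set s := (2⁻¹ : ℝ) • u + (2⁻¹ : ℝ) • v
  have hs : s ∈ Density μ := convex_density hu hv (by norm_num) (by norm_num) (by norm_num)
  have hsum : u + v = (2 : ℝ) • s := by module
  have hdiff : QQ Q u - QQ Q v = ‖u - v‖ • ((Q d₁ s - c) - (Q d₂ s - c)) := by
    conv_lhs => rw [hQ.QQ_sub_QQ, huv, hsum]
    simp only [← hQ.toLinearMap₂_apply, map_smul, map_sub, LinearMap.smul_apply,
      LinearMap.sub_apply]
    module
  calc ‖QQ Q u - QQ Q v‖ = ‖u - v‖ * ‖(Q d₁ s - c) - (Q d₂ s - c)‖ := by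
        rw [hdiff, norm_smul, norm_norm]
    _ ≤ ‖u - v‖ * (ε + ε) := by
        gcongr
        exact (norm_sub_le _ _).trans (add_le_add (hc d₁ hd₁ s hs) (hc d₂ hd₂ s hs))
    _ = 2 * ε * ‖u - v‖ := by ring

end IsQSO

end

theorem contraction_near_Qdiamond_general {X : Type*} [MeasurableSpace X]
    (μ : Measure X)
    (h : Lp ℝ 1 μ)
    (Qd : Lp ℝ 1 μ → Lp ℝ 1 μ → Lp ℝ 1 μ)
    (hQd : ∀ f g : Lp ℝ 1 μ, Qd f g = ((∫ a, f a ∂μ) * ∫ a, g a ∂μ) • h)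
    (Q : Lp ℝ 1 μ → Lp ℝ 1 μ → Lp ℝ 1 μ) (hQ : IsQSO μ Q)
    (ε : ℝ) (hε : dhat μ Q Qd = ε) :
    (∀ u ∈ closure (QQ Q '' Density μ), ∀ v ∈ closure (QQ Q '' Density μ),
        ‖QQ Q u - QQ Q v‖ ≤ 3 * ε * ‖u - v‖) ∧
    (∀ u ∈ QQ Q '' Density μ, ∀ v ∈ QQ Q '' Density μ, ‖u - v‖ ≤ 2 * ε) := by
  have hQd_density : ∀ f ∈ Density μ, ∀ g ∈ Density μ, Qd f g = h := fun f hf g hg => by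
    rw [hQd, integral_eq_one_of_mem_density hf, integral_eq_one_of_mem_density hg, one_mul,
      one_smul]
  have hQh : ∀ f ∈ Density μ, ∀ g ∈ Density μ, ‖Q f g - h‖ ≤ ε := fun f hf g hg => by
    rw [← hQd_density f hf g hg, ← hε]
    refine norm_sub_le_dhat (B := 1 + ‖h‖) (fun f hf g hg => ?_) hf hg
    rw [← (hQ.mem_density hf hg).2, ← hQd_density f hf g hg]
    exact norm_sub_le _ _
  have hε0 : 0 ≤ ε := hε ▸ dhat_nonneg Q Qd
  have hclosure : closure (QQ Q '' Density μ) ⊆ Density μ :=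
    closure_minimal (Set.image_subset_iff.mpr fun f hf => hQ.mem_density hf hf) isClosed_density
  refine ⟨fun u hu v hv => ?_, ?_⟩
  · calc ‖QQ Q u - QQ Q v‖ ≤ 2 * ε * ‖u - v‖ :=
          hQ.norm_QQ_sub_QQ_le hQh (hclosure hu) (hclosure hv)
      _ ≤ 3 * ε * ‖u - v‖ := by gcongr; norm_num
  · rintro _ ⟨f, hf, rfl⟩ _ ⟨g, hg, rfl⟩
    calc ‖QQ Q f - QQ Q g‖ ≤ ‖QQ Q f - h‖ + ‖h - QQ Q g‖ := norm_sub_le_norm_sub_add_norm_sub ..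
      _ ≤ ε + ε := add_le_add (hQh f hf f hf) (by rw [norm_sub_rev]; exact hQh g hg g hg)
      _ = 2 * ε := by ring

/-- Fix `h ∈ 𝒟`, let `Q⋄(f,g) = (∫ f dμ)(∫ g dμ)·h`, and let `Q` be a QSO
with `d̂_u(Q,Q⋄) = ε`. Then for all `u, v` in (the closure of) the image `ℚ(𝒟)` one has
`‖ℚ(u) − ℚ(v)‖₁ ≤ 3ε·‖u − v‖₁`, and the diameter of `ℚ(𝒟)` is at most `2ε`. -/
theorem contraction_near_Qdiamond {X : Type*} [MeasurableSpace X]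
    (μ : Measure X) [SigmaFinite μ]
    (h : Lp ℝ 1 μ) (hh : h ∈ Density μ)
    (Qd : Lp ℝ 1 μ → Lp ℝ 1 μ → Lp ℝ 1 μ)
    (hQd : ∀ f g : Lp ℝ 1 μ, Qd f g = ((∫ a, f a ∂μ) * ∫ a, g a ∂μ) • h)
    (Q : Lp ℝ 1 μ → Lp ℝ 1 μ → Lp ℝ 1 μ) (hQ : IsQSO μ Q)
    (ε : ℝ) (hε : dhat μ Q Qd = ε) :
    (∀ u ∈ closure (QQ Q '' Density μ), ∀ v ∈ closure (QQ Q '' Density μ),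
        ‖QQ Q u - QQ Q v‖ ≤ 3 * ε * ‖u - v‖) ∧
    (∀ u ∈ QQ Q '' Density μ, ∀ v ∈ QQ Q '' Density μ, ‖u - v‖ ≤ 2 * ε) :=
  contraction_near_Qdiamond_general μ h Qd hQd Q hQ ε hε
end

section
/- Let P : L¹ → L¹ be a Markov operator that possesses no invariant density (i.e., there is no f ∈ 𝒟 with Pf = f), and define the quadratic stochastic operator Q(f,g) := (1/2)((∫_X g dμ)·Pf + (∫_X f dμ)·Pg). Then ℚ(f) = Pf for every f ∈ 𝒟, ℚ has no invariant density, and Q is not strong mixing (hence not norm mixing); yet Q is norm quasi-mixing. In particular norm quasi-mixing does not imply strong mixing. -/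
open MeasureTheory Filter Topology

/-- A (linear) Markov operator on `L¹`. -/
structure IsMarkov {X : Type*} [MeasurableSpace X] (μ : Measure X)
    (P : Lp ℝ 1 μ → Lp ℝ 1 μ) : Prop where
  map_add : ∀ f g, P (f + g) = P f + P g
  map_smul : ∀ (c : ℝ) f, P (c • f) = c • P f
  nonneg : ∀ f, 0 ≤ f → 0 ≤ P f
  norm_eq : ∀ f, 0 ≤ f → ‖P f‖ = ‖f‖

/-- `Q` is strong mixing (asymptotically stable). -/
def StrongMixing {X : Type*} [MeasurableSpace X] (μ : Measure X)
    (Q : Lp ℝ 1 μ → Lp ℝ 1 μ → Lp ℝ 1 μ) : Prop :=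
  ∃ f ∈ Density μ, ∀ g ∈ Density μ,
    Tendsto (fun n => ‖Qiter Q n g - f‖) atTop (𝓝 0)

section Aux
variable {X : Type*} [MeasurableSpace X] {μ : Measure X}

lemma myIntegralEqNorm (f : Lp ℝ 1 μ) (hf : 0 ≤ f) : ∫ a, f a ∂μ = ‖f‖ := by
  rw [MeasureTheory.L1.norm_eq_integral_norm]
  refine integral_congr_ae ?_
  filter_upwards [(Lp.coeFn_nonneg f).2 hf] with a ha
  simp [Real.norm_eq_abs, abs_of_nonneg ha]

lemma myNormAdd (f g : Lp ℝ 1 μ) (hf : 0 ≤ f) (hg : 0 ≤ g) :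
    ‖f + g‖ = ‖f‖ + ‖g‖ := by
  rw [← myIntegralEqNorm f hf, ← myIntegralEqNorm g hg,
      ← myIntegralEqNorm (f + g) (add_nonneg hf hg)]
  have h1 : ∫ a, (f + g) a ∂μ = ∫ a, (f a + g a) ∂μ := integral_congr_ae (Lp.coeFn_add f g)
  rw [h1, integral_add (L1.integrable_coeFn f) (L1.integrable_coeFn g)]

lemma mySmulNonneg {c : ℝ} (hc : 0 ≤ c) (f : Lp ℝ 1 μ) (hf : 0 ≤ f) :
    0 ≤ c • f := by
  rw [← Lp.coeFn_nonneg]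
  filter_upwards [Lp.coeFn_smul c f, (Lp.coeFn_nonneg f).2 hf] with a h1 h2
  rw [Pi.zero_apply] at h2 ⊢
  rw [h1]
  exact mul_nonneg hc h2

lemma myMarkovSub {P : Lp ℝ 1 μ → Lp ℝ 1 μ} (hP : IsMarkov μ P) (a b : Lp ℝ 1 μ) :
    P (a - b) = P a - P b := by
  have h1 : a - b = a + (-1 : ℝ) • b := by
    rw [neg_one_smul, sub_eq_add_neg]
  rw [h1, hP.map_add, hP.map_smul, neg_one_smul, ← sub_eq_add_neg]

lemma myMarkovNormLe {P : Lp ℝ 1 μ → Lp ℝ 1 μ} (hP : IsMarkov μ P) (f : Lp ℝ 1 μ) :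
    ‖P f‖ ≤ ‖f‖ := by
  calc ‖P f‖ = ‖P (posPart f) - P (negPart f)‖ := by
        rw [← myMarkovSub hP, posPart_sub_negPart]
    _ ≤ ‖P (posPart f)‖ + ‖P (negPart f)‖ := norm_sub_le _ _
    _ = ‖posPart f‖ + ‖negPart f‖ := by
        rw [hP.norm_eq _ (posPart_nonneg f), hP.norm_eq _ (negPart_nonneg f)]
    _ = ‖posPart f + negPart f‖ :=
        (myNormAdd _ _ (posPart_nonneg f) (negPart_nonneg f)).symm
    _ = ‖|f|‖ := by rw [posPart_add_negPart]
    _ = ‖f‖ := norm_abs_eq_norm f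

lemma myMarkovCont {P : Lp ℝ 1 μ → Lp ℝ 1 μ} (hP : IsMarkov μ P) : Continuous P := by
  have : LipschitzWith 1 P := by
    refine LipschitzWith.of_dist_le_mul fun a b => ?_
    rw [dist_eq_norm, dist_eq_norm, ← myMarkovSub hP]
    simpa using myMarkovNormLe hP (a - b)
  exact this.continuous

end Aux

/-- If the Markov operator `P` has no invariant density and
`Q(f,g) = (1/2)((∫ g dμ)·Pf + (∫ f dμ)·Pg)`, then `ℚ(f) = Pf` on `𝒟`, `ℚ` has no
invariant density, `Q` is neither strong mixing nor norm mixing, yet `Q` is norm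
quasi-mixing. In particular norm quasi-mixing does not imply strong mixing. -/
theorem normQuasiMixing_not_strongMixing {X : Type*} [MeasurableSpace X]
    (μ : Measure X) [SigmaFinite μ]
    (P : Lp ℝ 1 μ → Lp ℝ 1 μ) (hP : IsMarkov μ P)
    (hninv : ¬ ∃ f ∈ Density μ, P f = f)
    (Q : Lp ℝ 1 μ → Lp ℝ 1 μ → Lp ℝ 1 μ)
    (hQ : ∀ f g : Lp ℝ 1 μ,
      Q f g = (1 / 2 : ℝ) • ((∫ a, g a ∂μ) • P f + (∫ a, f a ∂μ) • P g)) :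
    (∀ f ∈ Density μ, QQ Q f = P f) ∧
    (¬ ∃ f ∈ Density μ, QQ Q f = f) ∧
    ¬ StrongMixing μ Q ∧ ¬ NormMixing μ Q ∧ NormQuasiMixing μ Q := by
  -- integrals of densities are 1
  have hint : ∀ f ∈ Density μ, ∫ a, f a ∂μ = 1 := fun f hf => by
    rw [myIntegralEqNorm f hf.1, hf.2]
  -- Q on pairs of densities
  have hQD : ∀ d ∈ Density μ, ∀ u ∈ Density μ, Q d u = (1 / 2 : ℝ) • (P d + P u) := by
    intro d hd u hu
    rw [hQ, hint d hd, hint u hu, one_smul, one_smul]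
  -- P preserves densities
  have hPD : ∀ f ∈ Density μ, P f ∈ Density μ := fun f hf =>
    ⟨hP.nonneg f hf.1, by rw [hP.norm_eq f hf.1, hf.2]⟩
  -- part 1 : QQ Q f = P f on densities
  have part1 : ∀ f ∈ Density μ, QQ Q f = P f := by
    intro f hf
    have : QQ Q f = Q f f := rfl
    rw [this, hQD f hf f hf]
    rw [smul_add, ← add_smul]
    norm_num
  -- Q of densities is a density
  have hQmemD : ∀ d ∈ Density μ, ∀ u ∈ Density μ, Q d u ∈ Density μ := by
    intro d hd u hu
    rw [hQD d hd u hu]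
    constructor
    · exact mySmulNonneg (by norm_num) _ (add_nonneg (hPD d hd).1 (hPD u hu).1)
    · rw [norm_smul, myNormAdd _ _ (hPD d hd).1 (hPD u hu).1,
        (hPD d hd).2, (hPD u hu).2]
      norm_num
  -- Qiter recurrence and density preservation
  have hQsucc : ∀ (g : Lp ℝ 1 μ) (n : ℕ), Qiter Q (n + 1) g = QQ Q (Qiter Q n g) :=
    fun g n => Function.iterate_succ_apply' (QQ Q) n g
  have hQiterD : ∀ f ∈ Density μ, ∀ n, Qiter Q n f ∈ Density μ := by
    intro f hf n
    induction n with
    | zero => exact hf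
    | succ n ih =>
      rw [hQsucc, part1 _ ih]
      exact hPD _ ih
  have hQiterP : ∀ f ∈ Density μ, ∀ n, Qiter Q (n + 1) f = P (Qiter Q n f) := by
    intro f hf n
    rw [hQsucc, part1 _ (hQiterD f hf n)]
  -- no limit density can exist
  have hfix : ∀ f ∈ Density μ, ¬ Tendsto (fun n => ‖Qiter Q n f - f‖) atTop (𝓝 0) := by
    intro f hf h
    have h1 : Tendsto (fun n => Qiter Q n f) atTop (𝓝 f) :=
      tendsto_iff_norm_sub_tendsto_zero.2 h
    have h2 : Tendsto (fun n => Qiter Q (n + 1) f) atTop (𝓝 f) :=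
      h1.comp (tendsto_add_atTop_nat 1)
    have h3 : Tendsto (fun n => P (Qiter Q n f)) atTop (𝓝 (P f)) :=
      (myMarkovCont hP).continuousAt.tendsto.comp h1
    have h4 : Tendsto (fun n => P (Qiter Q n f)) atTop (𝓝 f) := by
      refine h2.congr fun n => ?_
      exact hQiterP f hf n
    exact hninv ⟨f, hf, tendsto_nhds_unique h3 h4⟩
  refine ⟨part1, ?_, ?_, ?_, ?_⟩
  · rintro ⟨f, hf, hff⟩
    exact hninv ⟨f, hf, by rw [← part1 f hf]; exact hff⟩
  · rintro ⟨f, hf, hconv⟩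
    exact hfix f hf (hconv f hf)
  · rintro ⟨f, hf, hconv⟩
    refine hfix f hf ?_
    have hub : ∀ n, ‖Qiter Q n f - f‖ ≤ ⨆ g : Density μ, ‖Qiter Q n g - f‖ := by
      intro n
      have hbdd : BddAbove (Set.range fun g : Density μ => ‖Qiter Q n (g : Lp ℝ 1 μ) - f‖) := by
        refine ⟨2, ?_⟩
        rintro x ⟨⟨g, hg⟩, rfl⟩
        calc ‖Qiter Q n g - f‖ ≤ ‖Qiter Q n g‖ + ‖f‖ := norm_sub_le _ _
          _ = 2 := by rw [(hQiterD g hg n).2, hf.2]; norm_num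
      exact le_ciSup hbdd (⟨f, hf⟩ : Density μ)
    exact squeeze_zero (fun n => norm_nonneg _) hub hconv
  · -- norm quasi-mixing
    have hchainD : ∀ f ∈ Density μ, ∀ g ∈ Density μ, ∀ n, Pchain Q f n g ∈ Density μ := by
      intro f hf g hg n
      induction n with
      | zero => exact hg
      | succ n ih => exact hQmemD _ (hQiterD f hf n) _ ih
    have hbound : ∀ f ∈ Density μ, ∀ g ∈ Density μ, ∀ h ∈ Density μ, ∀ n,
        ‖Pchain Q f n g - Pchain Q f n h‖ ≤ 2 * (1 / 2 : ℝ) ^ n := by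
      intro f hf g hg h hh n
      induction n with
      | zero =>
        simp only [Pchain, id, pow_zero, mul_one]
        calc ‖g - h‖ ≤ ‖g‖ + ‖h‖ := norm_sub_le _ _
          _ = 2 := by rw [hg.2, hh.2]; norm_num
      | succ n ih =>
        have hd := hQiterD f hf n
        have hu := hchainD f hf g hg n
        have hv := hchainD f hf h hh n
        have key : Pchain Q f (n + 1) g - Pchain Q f (n + 1) h
            = (1 / 2 : ℝ) • P (Pchain Q f n g - Pchain Q f n h) := by
          show Q (Qiter Q n f) (Pchain Q f n g) - Q (Qiter Q n f) (Pchain Q f n h) = _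
          rw [hQD _ hd _ hu, hQD _ hd _ hv, myMarkovSub hP, smul_sub, smul_add, smul_add]
          abel
        rw [key, norm_smul]
        calc ‖(1 / 2 : ℝ)‖ * ‖P (Pchain Q f n g - Pchain Q f n h)‖
            ≤ (1 / 2 : ℝ) * ‖Pchain Q f n g - Pchain Q f n h‖ := by
              rw [Real.norm_eq_abs, abs_of_nonneg (by norm_num : (0:ℝ) ≤ 1/2)]
              exact mul_le_mul_of_nonneg_left (myMarkovNormLe hP _) (by norm_num)
          _ ≤ (1 / 2 : ℝ) * (2 * (1 / 2 : ℝ) ^ n) :=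
              mul_le_mul_of_nonneg_left ih (by norm_num)
          _ = 2 * (1 / 2 : ℝ) ^ (n + 1) := by ring
    have hsup_le : ∀ n, supDiff μ Q n ≤ 2 * (1 / 2 : ℝ) ^ n := by
      intro n
      have hpos : (0 : ℝ) ≤ 2 * (1 / 2 : ℝ) ^ n := by positivity
      refine Real.iSup_le (fun f => ?_) hpos
      refine Real.iSup_le (fun g => ?_) hpos
      refine Real.iSup_le (fun h => ?_) hpos
      exact hbound f f.2 g g.2 h h.2 n
    have hsup_nonneg : ∀ n, 0 ≤ supDiff μ Q n := by
      intro n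
      refine Real.iSup_nonneg fun f => ?_
      refine Real.iSup_nonneg fun g => ?_
      exact Real.iSup_nonneg fun h => norm_nonneg _
    have htend : Tendsto (fun n => 2 * (1 / 2 : ℝ) ^ n) atTop (𝓝 0) := by
      have := tendsto_pow_atTop_nhds_zero_of_lt_one
        (by norm_num : (0:ℝ) ≤ 1/2) (by norm_num : (1/2:ℝ) < 1)
      simpa using this.const_mul 2
    exact squeeze_zero hsup_nonneg hsup_le htend
end

section
/- Let Q be a quadratic stochastic operator, v ∈ 𝒟 a fixed density, Q⋄(f,g) := (∫_X f dμ)(∫_X g dμ)·v, and for 0 < ε < 1 set Q_ε := (1−ε)Q + εQ⋄. Then Q_ε is a quadratic stochastic operator, d_u(Q,Q_ε) ≤ d̂_u(Q,Q_ε) ≤ 2ε, and for all n ≥ 1 the Markov chains associated with Q_ε satisfy sup_{f,g,h∈𝒟} ‖_εP_f^{[0,n]}(g) − _εP_f^{[0,n]}(h)‖₁ ≤ 2(1−ε)ⁿ; in particular Q_ε is norm quasi-mixing. -/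
open MeasureTheory Filter Topology

section Aux
open MeasureTheory
variable {X : Type*} [MeasurableSpace X] {μ : Measure X}

lemma lp_norm_eq_integral {f : Lp ℝ 1 μ} (hf : 0 ≤ f) : ‖f‖ = ∫ a, f a ∂μ := by
  rw [L1.norm_eq_integral_norm]
  refine integral_congr_ae ?_
  filter_upwards [(Lp.coeFn_nonneg f).mpr hf] with a ha using Real.norm_of_nonneg ha

lemma lp_integral_add (f g : Lp ℝ 1 μ) :
    ∫ a, (f + g : Lp ℝ 1 μ) a ∂μ = (∫ a, f a ∂μ) + ∫ a, g a ∂μ := by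
  rw [← L1.integral_eq_integral, ← L1.integral_eq_integral, ← L1.integral_eq_integral,
    L1.integral_add]

lemma lp_integral_smul (c : ℝ) (f : Lp ℝ 1 μ) :
    ∫ a, (c • f : Lp ℝ 1 μ) a ∂μ = c * ∫ a, f a ∂μ := by
  rw [← L1.integral_eq_integral, ← L1.integral_eq_integral, L1.integral_smul, smul_eq_mul]

lemma lp_integral_nonneg {f : Lp ℝ 1 μ} (hf : 0 ≤ f) : 0 ≤ ∫ a, f a ∂μ :=
  integral_nonneg_of_ae ((Lp.coeFn_nonneg f).mpr hf)

lemma lp_norm_add_of_nonneg {f g : Lp ℝ 1 μ} (hf : 0 ≤ f) (hg : 0 ≤ g) :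
    ‖f + g‖ = ‖f‖ + ‖g‖ := by
  rw [lp_norm_eq_integral (add_nonneg hf hg), lp_integral_add,
    lp_norm_eq_integral hf, lp_norm_eq_integral hg]

lemma qso_sub_right {Q : Lp ℝ 1 μ → Lp ℝ 1 μ → Lp ℝ 1 μ} (hQ : IsQSO μ Q)
    (a x y : Lp ℝ 1 μ) : Q a (x - y) = Q a x - Q a y := by
  have h : Q a (x + (-1 : ℝ) • y) = Q a x + (-1 : ℝ) • Q a y := by
    rw [hQ.add_right, hQ.smul_right]
  simpa [sub_eq_add_neg] using h

lemma qso_contraction {Q : Lp ℝ 1 μ → Lp ℝ 1 μ → Lp ℝ 1 μ} (hQ : IsQSO μ Q)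
    {a : Lp ℝ 1 μ} (ha0 : 0 ≤ a) (ha1 : ‖a‖ = 1) (w : Lp ℝ 1 μ) : ‖Q a w‖ ≤ ‖w‖ := by
  calc ‖Q a w‖ = ‖Q a w⁺ - Q a w⁻‖ := by
        rw [← qso_sub_right hQ, posPart_sub_negPart]
    _ ≤ ‖Q a w⁺‖ + ‖Q a w⁻‖ := norm_sub_le _ _
    _ = ‖a‖ * ‖w⁺‖ + ‖a‖ * ‖w⁻‖ := by
        rw [hQ.norm_mul _ _ ha0 (posPart_nonneg w), hQ.norm_mul _ _ ha0 (negPart_nonneg w)]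
    _ = ‖w⁺‖ + ‖w⁻‖ := by rw [ha1]; ring
    _ = ‖w⁺ + w⁻‖ := (lp_norm_add_of_nonneg (posPart_nonneg w) (negPart_nonneg w)).symm
    _ = ‖w‖ := by rw [posPart_add_negPart, norm_abs_eq_norm]

lemma lp_smul_nonneg {X : Type*} [MeasurableSpace X] {μ : MeasureTheory.Measure X}
    {c : ℝ} (hc : 0 ≤ c) {f : MeasureTheory.Lp ℝ 1 μ} (hf : 0 ≤ f) : 0 ≤ c • f := by
  rw [← MeasureTheory.Lp.coeFn_nonneg]
  filter_upwards [MeasureTheory.Lp.coeFn_smul c f,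
    (MeasureTheory.Lp.coeFn_nonneg f).mpr hf] with a h1 h2
  rw [Pi.zero_apply, h1, Pi.smul_apply, smul_eq_mul]
  exact mul_nonneg hc h2

end Aux


/-- Let `Q` be a QSO, `v ∈ 𝒟`, `Q⋄(f,g) = (∫ f dμ)(∫ g dμ)·v`, and for
`0 < ε < 1` let `Q_ε = (1−ε)Q + εQ⋄`. Then `Q_ε` is a QSO,
`d_u(Q,Q_ε) ≤ d̂_u(Q,Q_ε) ≤ 2ε`, and the Markov chains associated with `Q_ε` satisfy
`sup_{f,g,h∈𝒟} ‖_εP_f^{[0,n]}(g) − _εP_f^{[0,n]}(h)‖₁ ≤ 2(1−ε)ⁿ` for all `n ≥ 1`;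
in particular `Q_ε` is norm quasi-mixing. -/
theorem perturbation_normQuasiMixing {X : Type*} [MeasurableSpace X]
    (μ : Measure X) [SigmaFinite μ]
    (Q : Lp ℝ 1 μ → Lp ℝ 1 μ → Lp ℝ 1 μ) (hQ : IsQSO μ Q)
    (v : Lp ℝ 1 μ) (hv : v ∈ Density μ)
    (Qd : Lp ℝ 1 μ → Lp ℝ 1 μ → Lp ℝ 1 μ)
    (hQd : ∀ f g : Lp ℝ 1 μ, Qd f g = ((∫ a, f a ∂μ) * ∫ a, g a ∂μ) • v)
    (ε : ℝ) (hε0 : 0 < ε) (hε1 : ε < 1)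
    (Qe : Lp ℝ 1 μ → Lp ℝ 1 μ → Lp ℝ 1 μ)
    (hQe : ∀ f g : Lp ℝ 1 μ, Qe f g = (1 - ε) • Q f g + ε • Qd f g) :
    IsQSO μ Qe ∧
    du μ Q Qe ≤ dhat μ Q Qe ∧ dhat μ Q Qe ≤ 2 * ε ∧
    (∀ n : ℕ, 1 ≤ n → supDiff μ Qe n ≤ 2 * (1 - ε) ^ n) ∧
    NormQuasiMixing μ Qe := by
  have hε0' : (0:ℝ) ≤ 1 - ε := by linarith
  have hIdens : ∀ f : Lp ℝ 1 μ, f ∈ Density μ → ∫ a, f a ∂μ = 1 := fun f hf => by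
    rw [← lp_norm_eq_integral hf.1, hf.2]
  have hIv : ∫ a, v a ∂μ = 1 := hIdens v hv
  -- Qe is a QSO
  have hQeQSO : IsQSO μ Qe := by
    constructor
    · intro f f' g
      simp only [hQe, hQd, hQ.add_left, lp_integral_add, add_mul]
      module
    · intro c f g
      simp only [hQe, hQd, hQ.smul_left, lp_integral_smul]
      have : c * (∫ a, f a ∂μ) * ∫ a, g a ∂μ = c * ((∫ a, f a ∂μ) * ∫ a, g a ∂μ) := by ring
      rw [this]
      module
    · intro f g g'
      simp only [hQe, hQd, hQ.add_right, lp_integral_add, mul_add]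
      module
    · intro c f g
      simp only [hQe, hQd, hQ.smul_right, lp_integral_smul]
      have : (∫ a, f a ∂μ) * (c * ∫ a, g a ∂μ) = c * ((∫ a, f a ∂μ) * ∫ a, g a ∂μ) := by ring
      rw [this]
      module
    · intro f g hf hg
      rw [hQe, hQd]
      exact add_nonneg
        (lp_smul_nonneg hε0' (hQ.nonneg f g hf hg))
        (lp_smul_nonneg hε0.le (lp_smul_nonneg
          (mul_nonneg (lp_integral_nonneg hf) (lp_integral_nonneg hg)) hv.1))
    · intro f g
      rw [hQe, hQe, hQd, hQd, hQ.symm, mul_comm]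
    · intro f g hf hg
      have h0 : (0:Lp ℝ 1 μ) ≤ Qe f g := by
        rw [hQe, hQd]
        exact add_nonneg
          (lp_smul_nonneg hε0' (hQ.nonneg f g hf hg))
          (lp_smul_nonneg hε0.le (lp_smul_nonneg
            (mul_nonneg (lp_integral_nonneg hf) (lp_integral_nonneg hg)) hv.1))
      rw [lp_norm_eq_integral h0, hQe, hQd, lp_integral_add, lp_integral_smul,
        lp_integral_smul, lp_integral_smul, hIv,
        ← lp_norm_eq_integral (hQ.nonneg f g hf hg), hQ.norm_mul f g hf hg,
        ← lp_norm_eq_integral hf, ← lp_norm_eq_integral hg]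
      ring
  -- pointwise bound for dhat
  have hpt : ∀ f g : Lp ℝ 1 μ, f ∈ Density μ → g ∈ Density μ →
      ‖Q f g - Qe f g‖ ≤ 2 * ε := by
    intro f g hf hg
    have hdiff : Q f g - Qe f g = ε • (Q f g - Qd f g) := by
      rw [hQe]; module
    rw [hdiff, norm_smul, Real.norm_of_nonneg hε0.le]
    have h1 : ‖Q f g‖ = 1 := by rw [hQ.norm_mul f g hf.1 hg.1, hf.2, hg.2, one_mul]
    have h2 : ‖Qd f g‖ = 1 := by
      rw [hQd, norm_smul, Real.norm_of_nonneg
        (mul_nonneg (lp_integral_nonneg hf.1) (lp_integral_nonneg hg.1)),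
        hIdens f hf, hIdens g hg, hv.2]
      ring
    calc ε * ‖Q f g - Qd f g‖ ≤ ε * (‖Q f g‖ + ‖Qd f g‖) :=
          mul_le_mul_of_nonneg_left (norm_sub_le _ _) hε0.le
      _ = 2 * ε := by rw [h1, h2]; ring
  have hdhat : dhat μ Q Qe ≤ 2 * ε := by
    refine Real.iSup_le (fun f => Real.iSup_le (fun g => hpt f g f.2 g.2) (by positivity))
      (by positivity)
  have hdu : du μ Q Qe ≤ dhat μ Q Qe := by
    refine Real.iSup_le (fun f => ?_) ?_
    · calc ‖Q (f:Lp ℝ 1 μ) f - Qe f f‖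
          ≤ ⨆ g : Density μ, ‖Q (f:Lp ℝ 1 μ) g - Qe f g‖ := by
            refine le_ciSup (f := fun g : Density μ => ‖Q (f:Lp ℝ 1 μ) g - Qe f g‖)
              ⟨2 * ε, ?_⟩ f
            rintro x ⟨g, rfl⟩
            exact hpt f g f.2 g.2
        _ ≤ dhat μ Q Qe := by
            refine le_ciSup
              (f := fun f' : Density μ => ⨆ g : Density μ, ‖Q (f':Lp ℝ 1 μ) g - Qe f' g‖)
              ⟨2 * ε, ?_⟩ f
            rintro x ⟨f', rfl⟩
            exact Real.iSup_le (fun g => hpt f' g f'.2 g.2) (by positivity)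
    · exact Real.iSup_nonneg fun f => Real.iSup_nonneg fun g => norm_nonneg _
  -- densities are preserved
  have hQeD : ∀ f g : Lp ℝ 1 μ, f ∈ Density μ → g ∈ Density μ → Qe f g ∈ Density μ := by
    intro f g hf hg
    exact ⟨hQeQSO.nonneg f g hf.1 hg.1, by
      rw [hQeQSO.norm_mul f g hf.1 hg.1, hf.2, hg.2, one_mul]⟩
  have hIterD : ∀ (n : ℕ) (f : Lp ℝ 1 μ), f ∈ Density μ → Qiter Qe n f ∈ Density μ := by
    intro n
    induction n with
    | zero => intro f hf; simpa [Qiter] using hf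
    | succ n ih =>
      intro f hf
      have : Qiter Qe (n+1) f = QQ Qe (Qiter Qe n f) := by
        simp [Qiter, Function.iterate_succ_apply']
      rw [this]
      exact hQeD _ _ (ih f hf) (ih f hf)
  have hPD : ∀ (n : ℕ) (f g : Lp ℝ 1 μ), f ∈ Density μ → g ∈ Density μ →
      Pchain Qe f n g ∈ Density μ := by
    intro n
    induction n with
    | zero => intro f g hf hg; simpa [Pchain] using hg
    | succ n ih =>
      intro f g hf hg
      simp only [Pchain]
      exact hQeD _ _ (hIterD n f hf) (ih f g hf hg)
  -- one-step contraction
  have hstep : ∀ a g' h' : Lp ℝ 1 μ, a ∈ Density μ → g' ∈ Density μ → h' ∈ Density μ →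
      ‖Qe a g' - Qe a h'‖ ≤ (1 - ε) * ‖g' - h'‖ := by
    intro a g' h' ha hg' hh'
    have hdiff : Qe a g' - Qe a h' = (1 - ε) • Q a (g' - h') := by
      rw [hQe, hQe, hQd, hQd, hIdens g' hg', hIdens h' hh', qso_sub_right hQ]
      module
    rw [hdiff, norm_smul, Real.norm_of_nonneg hε0']
    exact mul_le_mul_of_nonneg_left (qso_contraction hQ ha.1 ha.2 _) hε0'
  -- main estimate
  have hmain : ∀ (n : ℕ) (f g h : Lp ℝ 1 μ), f ∈ Density μ → g ∈ Density μ →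
      h ∈ Density μ → ‖Pchain Qe f n g - Pchain Qe f n h‖ ≤ 2 * (1 - ε) ^ n := by
    intro n
    induction n with
    | zero =>
      intro f g h hf hg hh
      simp only [Pchain, id_eq, pow_zero, mul_one]
      calc ‖g - h‖ ≤ ‖g‖ + ‖h‖ := norm_sub_le _ _
        _ = 2 := by rw [hg.2, hh.2]; norm_num
    | succ n ih =>
      intro f g h hf hg hh
      simp only [Pchain]
      calc ‖Qe (Qiter Qe n f) (Pchain Qe f n g) - Qe (Qiter Qe n f) (Pchain Qe f n h)‖
          ≤ (1 - ε) * ‖Pchain Qe f n g - Pchain Qe f n h‖ :=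
            hstep _ _ _ (hIterD n f hf) (hPD n f g hf hg) (hPD n f h hf hh)
        _ ≤ (1 - ε) * (2 * (1 - ε) ^ n) :=
            mul_le_mul_of_nonneg_left (ih f g h hf hg hh) hε0'
        _ = 2 * (1 - ε) ^ (n + 1) := by ring
  have hsup : ∀ n : ℕ, supDiff μ Qe n ≤ 2 * (1 - ε) ^ n := by
    intro n
    have hnn : (0:ℝ) ≤ 2 * (1 - ε) ^ n := by positivity
    exact Real.iSup_le (fun f => Real.iSup_le (fun g => Real.iSup_le
      (fun h => hmain n f g h f.2 g.2 h.2) hnn) hnn) hnn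
  refine ⟨hQeQSO, hdu, hdhat, fun n _ => hsup n, ?_⟩
  -- norm quasi-mixing
  have h0 : ∀ n, 0 ≤ supDiff μ Qe n := fun n =>
    Real.iSup_nonneg fun f => Real.iSup_nonneg fun g => Real.iSup_nonneg fun h => norm_nonneg _
  have htend : Tendsto (fun n : ℕ => 2 * (1 - ε) ^ n) atTop (𝓝 0) := by
    have habs : |1 - ε| < 1 := by rw [abs_of_nonneg hε0']; linarith
    have := (tendsto_pow_atTop_nhds_zero_of_abs_lt_one habs).const_mul 2
    simpa using this
  exact squeeze_zero h0 hsup htend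
end
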